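/- Let w be a fixed point of w = H_λ(w − Gᵀ(Gw − b)) with S = supp(w), and suppose G_S has linearly independent columns. Then for any nonzero perturbation η with supp(η) ⊆ S and ‖η‖_∞ < λ, the objective strictly increases: F(w + η) > F(w), where F(v) = (1/2)‖Gv − b‖₂² + (λ²/2)‖v‖₀. -/
import Mathlib


open Finset
open scoped Classical BigOperators symmDiff

/-- Euclidean (ℓ²) norm of a vector in `ℝⁿ`. -/
noncomputable def norm2 {n : ℕ} (x : Fin n → ℝ) : ℝ := Real.sqrt (∑ i, (x i)^2)

/-- Support of a vector: the set of indices with nonzero entries. -/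
noncomputable def supp {n : ℕ} (x : Fin n → ℝ) : Finset (Fin n) :=
  Finset.univ.filter (fun i => x i ≠ 0)

/-- Hard thresholding operator with threshold `lam`. -/
noncomputable def Hthr {n : ℕ} (lam : ℝ) (x : Fin n → ℝ) : Fin n → ℝ :=
  fun i => if lam ≤ |x i| then x i else 0

lemma norm2_sq {n : ℕ} (x : Fin n → ℝ) : (norm2 x)^2 = ∑ i, (x i)^2 :=
  Real.sq_sqrt (Finset.sum_nonneg fun i _ => sq_nonneg _)

/-- If additionally the columns of `G` indexed by `supp w` are linearly independent,
then nonzero perturbations supported in `supp w` with `‖η‖∞ < λ` strictly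
increase the objective. -/
theorem stmt_7 {m n : ℕ} (G : Matrix (Fin m) (Fin n) ℝ) (b : Fin m → ℝ) (lam : ℝ)
    (hlam : 0 < lam) (w : Fin n → ℝ)
    (hfix : w = Hthr lam (w - G.transpose.mulVec (G.mulVec w - b)))
    (hind : LinearIndependent ℝ (fun i : {i // i ∈ supp w} => G.transpose i.1))
    (F : (Fin n → ℝ) → ℝ)
    (hF : ∀ v, F v = (1/2) * (norm2 (G.mulVec v - b))^2 + lam^2/2 * ((supp v).card : ℝ))
    (η : Fin n → ℝ) (hne : η ≠ 0) (hsupp : supp η ⊆ supp w) (hinf : ∀ i, |η i| < lam) :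
    F w < F (w + η) := by
  set r := G.mulVec w - b with hr
  set g := G.transpose.mulVec r with hg
  -- off-support entries of η vanish
  have hηzero : ∀ i, i ∉ supp w → η i = 0 := by
    intro i hi
    by_contra hη
    exact hi (hsupp (by simp [supp, hη]))
  -- key facts on the support
  have hkey : ∀ i ∈ supp w, g i = 0 ∧ lam ≤ |w i| := by
    intro i hi
    have hwi : w i ≠ 0 := by simpa [supp] using hi
    have hfi := congrFun hfix i
    simp only [Hthr] at hfi
    split_ifs at hfi with h
    · have h1 : (w - g) i = w i - g i := rfl
      rw [h1] at hfi
      have hgi : g i = 0 := by linarith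
      rw [h1, hgi, sub_zero] at h
      exact ⟨hgi, h⟩
    · exact absurd hfi hwi
  -- support is preserved
  have hsuppeq : supp (w + η) = supp w := by
    ext i
    simp only [supp, mem_filter, mem_univ, true_and]
    constructor
    · intro h
      by_contra hw
      have hwi : w i = 0 := hw
      have hηi : η i = 0 := hηzero i (by simp [supp, hwi])
      exact h (by simp [Pi.add_apply, hwi, hηi])
    · intro hwi
      have hi : i ∈ supp w := by simp [supp, hwi]
      have hlt : |η i| < |w i| := lt_of_lt_of_le (hinf i) (hkey i hi).2
      intro h0
      have : η i = -w i := by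
        have := congrArg (fun x => x - w i) h0
        simpa [Pi.add_apply] using this
      rw [this, abs_neg] at hlt
      exact lt_irrefl _ hlt
  set u := G.mulVec η with hu
  -- cross term vanishes
  have hcross : ∑ j, r j * u j = 0 := by
    have h1 : ∑ j, r j * u j = dotProduct r u := rfl
    rw [h1, hu, Matrix.dotProduct_mulVec, ← Matrix.mulVec_transpose, ← hg]
    apply Finset.sum_eq_zero
    intro i _
    by_cases hi : i ∈ supp w
    · simp [(hkey i hi).1]
    · simp [hηzero i hi]
  -- u ≠ 0
  have huz : u ≠ 0 := by
    intro h0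
    apply hne
    have hc : ∀ i : {i // i ∈ supp w}, η i.1 = 0 := by
      apply Fintype.linearIndependent_iff.mp hind (fun i => η i.1)
      funext j
      have : (∑ i : {i // i ∈ supp w}, η i.1 • G.transpose i.1) j
          = ∑ i : {i // i ∈ supp w}, η i.1 * G.transpose i.1 j := by
        simp [Finset.sum_apply]
      rw [Pi.zero_apply]
      calc (∑ i : {i // i ∈ supp w}, η i.1 • G.transpose i.1) j
          = ∑ i : {i // i ∈ supp w}, η i.1 * G.transpose i.1 j := this
        _ = ∑ i ∈ supp w, η i * G.transpose i j := by
            rw [Finset.univ_eq_attach]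
            exact Finset.sum_attach (supp w) (fun i => η i * G.transpose i j)
        _ = ∑ i, η i * G j i := by
            rw [Finset.sum_subset (Finset.subset_univ _)]
            · rfl
            · intro i _ hi
              simp [hηzero i hi]
        _ = u j := by
            rw [hu, Matrix.mulVec, dotProduct]
            exact Finset.sum_congr rfl fun i _ => mul_comm _ _
        _ = 0 := congrFun h0 j
    funext i
    by_cases hi : i ∈ supp w
    · exact hc ⟨i, hi⟩
    · exact hηzero i hi
  have hupos : 0 < ∑ j, (u j)^2 := by
    rcases Function.ne_iff.mp huz with ⟨j, hj⟩
    exact Finset.sum_pos' (fun k _ => sq_nonneg _)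
      ⟨j, Finset.mem_univ j, lt_of_le_of_ne (sq_nonneg _) (Ne.symm (pow_ne_zero 2 hj))⟩
  -- put it together
  rw [hF, hF, hsuppeq]
  have hGsum : G.mulVec (w + η) - b = fun j => r j + u j := by
    funext j
    simp [Matrix.mulVec_add, hr, hu]
    ring
  rw [norm2_sq, norm2_sq, hGsum]
  have hexp : ∑ j, ((fun j => r j + u j) j)^2
      = ∑ j, (r j)^2 + 2 * ∑ j, r j * u j + ∑ j, (u j)^2 := by
    have he : ∀ j, ((fun j => r j + u j) j)^2
        = (r j)^2 + 2*(r j * u j) + (u j)^2 := fun j => by ring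
    simp_rw [he]
    rw [Finset.sum_add_distrib, Finset.sum_add_distrib, ← Finset.mul_sum]
  rw [hexp, hcross]
  linarith
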